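/- Define w(τ) = θ_{(0,0)}(τ)² · θ_{(0,1)}(τ)² · θ_{(1,0)}(τ)² for τ in the complex upper half plane. Then for every matrix γ = [[a, b], [c, d]] ∈ SL₂(ℤ), lim_{t → ∞} (c·(i t) + d)^{−3} · w((a·(i t) + b)/(c·(i t) + d)) = 0, where t ranges over positive reals. In other words, every SL₂(ℤ)-translate of the weight-3 form w vanishes at the cusp i∞, so w is a cusp form. -/

import Mathlib

open Complex

/-- The genus-one theta constant
`θ_{(a,b)}(τ) = ∑_{n ∈ ℤ} exp(πiτ(n + a/2)² + πi(n + a/2)b)`. -/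
noncomputable def theta1 (a b : ℤ) (τ : ℂ) : ℂ :=
  ∑' n : ℤ, Complex.exp (Real.pi * I * τ * ((n : ℂ) + (a : ℂ) / 2) ^ 2 +
    Real.pi * I * ((n : ℂ) + (a : ℂ) / 2) * (b : ℂ))

/-- The weight-3 form `w(τ) = θ_{(0,0)}(τ)² θ_{(0,1)}(τ)² θ_{(1,0)}(τ)²`. -/
noncomputable def wForm (τ : ℂ) : ℂ :=
  theta1 0 0 τ ^ 2 * theta1 0 1 τ ^ 2 * theta1 1 0 τ ^ 2

/-!
Writing `θ_{(0,b)}(τ) = jacobiTheta₂ (b/2) τ` and `θ_{(1,0)}(τ) = e^{πiτ/4} jacobiTheta₂ (τ/2) τ`,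
the translation `τ ↦ τ + 1` swaps `θ_{(0,0)}` and `θ_{(0,1)}` and multiplies `θ_{(1,0)}` by
`e^{πi/4}`, while the Jacobi inversion formula shows that `τ ↦ -1/τ` permutes the three squares
`θ²` up to the common factor `-iτ`. Hence `w ∣₃ T = i w` and `w ∣₃ S = i w`, and since `S` and
`T` generate `SL₂(ℤ)`, every `w ∣₃ γ` is a nonzero multiple of `w`. Finally `w` itself decays
like `e^{-π Im τ / 2}`, because `θ_{(1,0)}` carries the factor `e^{πiτ/4}` and the theta series
are uniformly bounded for `Im τ ≥ 1`.
-/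

open Filter Topology
open scoped Real ModularForm MatrixGroups
open UpperHalfPlane (IsZeroAtImInfty atImInfty atImInfty_mem ofComplex ofComplex_apply_of_im_pos)
open ModularGroup (S T)

lemma jacobiTheta₂_add_one_right (z τ : ℂ) :
    jacobiTheta₂ z (τ + 1) = jacobiTheta₂ (z + 1 / 2) τ := by
  refine tsum_congr fun n => ?_
  obtain ⟨m, hm⟩ := Int.even_mul_pred_self n
  have hm' : (n : ℂ) * (n - 1) = m + m := by exact_mod_cast hm
  rw [jacobiTheta₂_term, jacobiTheta₂_term,
    show 2 * π * I * n * z + π * I * n ^ 2 * (τ + 1) =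
      2 * π * I * n * (z + 1 / 2) + π * I * n ^ 2 * τ + m * (2 * π * I) by
      linear_combination (π * I) * hm',
    exp_add, exp_int_mul_two_pi_mul_I, mul_one]

lemma theta1_zero_eq_jacobiTheta₂ (b : ℤ) (τ : ℂ) : theta1 0 b τ = jacobiTheta₂ (b / 2) τ :=
  tsum_congr fun n => by rw [jacobiTheta₂_term]; push_cast; ring_nf

lemma theta1_one_zero_eq (τ : ℂ) :
    theta1 1 0 τ = cexp (π * I * τ / 4) * jacobiTheta₂ (τ / 2) τ := by
  rw [jacobiTheta₂, ← tsum_mul_left]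
  exact tsum_congr fun n => by rw [jacobiTheta₂_term, ← exp_add]; push_cast; ring_nf

lemma theta1_00_add_one (τ : ℂ) : theta1 0 0 (τ + 1) = theta1 0 1 τ := by
  simp [theta1_zero_eq_jacobiTheta₂, jacobiTheta₂_add_one_right]

lemma theta1_01_add_one (τ : ℂ) : theta1 0 1 (τ + 1) = theta1 0 0 τ := by
  rw [theta1_zero_eq_jacobiTheta₂, theta1_zero_eq_jacobiTheta₂, jacobiTheta₂_add_one_right]
  simpa [← one_div] using jacobiTheta₂_add_left 0 τ

lemma theta1_10_add_one (τ : ℂ) :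
    theta1 1 0 (τ + 1) = cexp (π * I / 4) * theta1 1 0 τ := by
  rw [theta1_one_zero_eq, theta1_one_zero_eq, jacobiTheta₂_add_one_right,
    show (τ + 1) / 2 + 1 / 2 = τ / 2 + 1 by ring, jacobiTheta₂_add_left,
    ← mul_assoc, ← exp_add]
  ring_nf

lemma wForm_add_one (τ : ℂ) : wForm (τ + 1) = I * wForm τ := by
  have h : cexp (π * I / 4) ^ 2 = I := by
    rw [← exp_nat_mul]
    convert exp_pi_div_two_mul_I using 2
    push_cast
    ring
  rw [wForm, wForm, theta1_00_add_one, theta1_01_add_one, theta1_10_add_one, mul_pow, h]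
  ring

-- Squaring removes the branch of `(-iτ) ^ (1/2)` from the inversion formula.
lemma jacobiTheta₂_neg_one_div_sq (z τ : ℂ) :
    jacobiTheta₂ z (-1 / τ) ^ 2 =
      -I * τ * cexp (2 * π * I * z ^ 2 * τ) * jacobiTheta₂ (z * τ) τ ^ 2 := by
  rw [jacobiTheta₂_functional_equation, show -1 / (-1 / τ) = τ by field_simp,
    show z / (-1 / τ) = -(z * τ) by field_simp, jacobiTheta₂_neg_left,
    mul_pow, mul_pow, div_pow, one_div 2, cpow_ofNat_inv_pow, ← exp_nat_mul]
  rcases eq_or_ne τ 0 with rfl | hτ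
  · simp
  · field_simp
    ring_nf
    rw [I_sq]
    ring

lemma theta1_00_neg_one_div_sq (τ : ℂ) :
    theta1 0 0 (-1 / τ) ^ 2 = -I * τ * theta1 0 0 τ ^ 2 := by
  simp [theta1_zero_eq_jacobiTheta₂, jacobiTheta₂_neg_one_div_sq]

lemma theta1_01_neg_one_div_sq (τ : ℂ) :
    theta1 0 1 (-1 / τ) ^ 2 = -I * τ * theta1 1 0 τ ^ 2 := by
  rw [theta1_zero_eq_jacobiTheta₂, jacobiTheta₂_neg_one_div_sq, theta1_one_zero_eq, mul_pow,
    ← exp_nat_mul]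
  push_cast
  ring_nf

lemma theta1_10_neg_one_div_sq {τ : ℂ} (hτ : τ ≠ 0) :
    theta1 1 0 (-1 / τ) ^ 2 = -I * τ * theta1 0 1 τ ^ 2 := by
  rw [theta1_one_zero_eq, mul_pow, jacobiTheta₂_neg_one_div_sq, theta1_zero_eq_jacobiTheta₂,
    show -1 / τ / 2 * τ = -(1 / 2) by field_simp, jacobiTheta₂_neg_left, ← exp_nat_mul]
  have h : cexp (((2 : ℕ) : ℂ) * (π * I * (-1 / τ) / 4)) *
      cexp (2 * π * I * (-1 / τ / 2) ^ 2 * τ) = 1 := by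
    rw [← exp_add, show _ + _ = (0 : ℂ) by field_simp; ring, exp_zero]
  push_cast
  linear_combination (-I * τ * jacobiTheta₂ (1 / 2) τ ^ 2) * h

lemma wForm_neg_one_div {τ : ℂ} (hτ : τ ≠ 0) : wForm (-1 / τ) = I * τ ^ 3 * wForm τ := by
  simp only [wForm]
  rw [theta1_00_neg_one_div_sq, theta1_01_neg_one_div_sq, theta1_10_neg_one_div_sq hτ]
  linear_combination (-I * τ ^ 3 * theta1 0 0 τ ^ 2 * theta1 0 1 τ ^ 2 * theta1 1 0 τ ^ 2) * I_sq

lemma exists_slash_eq_smul_of_slash_S_of_slash_T {k : ℤ} {f : UpperHalfPlane → ℂ} {u v : ℂˣ}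
    (hS : f ∣[k] S = (u : ℂ) • f) (hT : f ∣[k] T = (v : ℂ) • f)
    (γ : SL(2, ℤ)) : ∃ c : ℂˣ, f ∣[k] γ = (c : ℂ) • f := by
  have hγ : γ ∈ Subgroup.closure {S, T} := by
    simp [SpecialLinearGroup.SL2Z_generators]
  induction hγ using Subgroup.closure_induction with
  | mem γ hγ =>
    rcases hγ with rfl | rfl
    exacts [⟨u, hS⟩, ⟨v, hT⟩]
  | one => exact ⟨1, by simp⟩
  | mul γ δ _ _ hγ hδ =>
    obtain ⟨c, hc⟩ := hγ
    obtain ⟨d, hd⟩ := hδ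
    exact ⟨c * d, by rw [SlashAction.slash_mul, hc, ModularForm.SL_smul_slash, hd, smul_smul,
      Units.val_mul]⟩
  | inv γ _ hγ =>
    obtain ⟨c, hc⟩ := hγ
    refine ⟨c⁻¹, ?_⟩
    have h : (c : ℂ) • f ∣[k] γ⁻¹ = f := by
      rw [← ModularForm.SL_smul_slash, ← hc, ← SlashAction.slash_mul, mul_inv_cancel,
        SlashAction.slash_one]
    rwa [Units.val_inv_eq_inv_val, eq_inv_smul_iff₀ c.ne_zero]

lemma wForm_slash_T : (wForm ∘ UpperHalfPlane.coe) ∣[(3 : ℤ)] T =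
    I • (wForm ∘ UpperHalfPlane.coe) := by
  ext τ
  rw [ModularForm.SL_slash_apply, ModularGroup.denom_apply, UpperHalfPlane.modular_T_smul]
  simp [T, add_comm, wForm_add_one]

lemma wForm_slash_S : (wForm ∘ UpperHalfPlane.coe) ∣[(3 : ℤ)] S =
    I • (wForm ∘ UpperHalfPlane.coe) := by
  ext τ
  rw [ModularForm.SL_slash_apply, UpperHalfPlane.modular_S_smul, ModularGroup.denom_S]
  simp only [Function.comp_apply, Pi.smul_apply, smul_eq_mul]
  rw [show (-(τ : ℂ))⁻¹ = -1 / τ by ring, wForm_neg_one_div τ.ne_zero]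
  field_simp [τ.ne_zero]

lemma exists_norm_jacobiTheta₂_le :
    ∃ C, ∀ z τ : ℂ, 1 ≤ τ.im → |z.im| ≤ τ.im / 2 → ‖jacobiTheta₂ z τ‖ ≤ C := by
  have hg : Summable fun n : ℤ => rexp (-(π * (n ^ 2 - |n|))) := by
    simpa using summable_pow_mul_jacobiTheta₂_term_bound (1 / 2) one_pos 0
  refine ⟨∑' n : ℤ, rexp (-(π * (n ^ 2 - |n|))), fun z τ hτ hz =>
    tsum_of_norm_bounded hg.hasSum fun n => ?_⟩
  have hn : (|n| : ℝ) ≤ n ^ 2 := by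
    rw [← sq_abs]; exact_mod_cast Int.le_self_sq |n|
  refine (norm_jacobiTheta₂_term_le (by linarith) hz le_rfl n).trans ?_
  rw [Real.exp_le_exp]
  push_cast
  nlinarith [mul_nonneg (mul_nonneg Real.pi_pos.le (sub_nonneg.2 hτ)) (sub_nonneg.2 hn)]

lemma exists_norm_wForm_le :
    ∃ C, ∀ τ : ℂ, 1 ≤ τ.im → ‖wForm τ‖ ≤ C * rexp (-π * τ.im / 2) := by
  obtain ⟨C, hC⟩ := exists_norm_jacobiTheta₂_le
  refine ⟨C ^ 6, fun τ hτ => ?_⟩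
  have h0 (b : ℤ) : ‖theta1 0 b τ‖ ≤ C := by
    rw [theta1_zero_eq_jacobiTheta₂]
    exact hC _ _ hτ (by simp; linarith)
  have h10 : ‖theta1 1 0 τ‖ ≤ rexp (-π * τ.im / 4) * C := by
    rw [theta1_one_zero_eq, norm_mul, norm_exp]
    gcongr
    · simp
    · exact hC _ _ hτ (by simp [abs_of_nonneg (show 0 ≤ τ.im / 2 by linarith)])
  rw [wForm, norm_mul, norm_mul, norm_pow, norm_pow, norm_pow]
  calc ‖theta1 0 0 τ‖ ^ 2 * ‖theta1 0 1 τ‖ ^ 2 * ‖theta1 1 0 τ‖ ^ 2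
      ≤ C ^ 2 * C ^ 2 * (rexp (-π * τ.im / 4) * C) ^ 2 := by
        gcongr
        exacts [h0 0, h0 1]
    _ = C ^ 6 * rexp (-π * τ.im / 2) := by
      rw [mul_pow, ← Real.exp_nat_mul]; ring_nf

lemma isZeroAtImInfty_wForm : IsZeroAtImInfty (wForm ∘ UpperHalfPlane.coe) := by
  obtain ⟨C, hC⟩ := exists_norm_wForm_le
  have hexp : Tendsto (fun y : ℝ => C * rexp (-π * y / 2)) atTop (𝓝 0) := by
    have h := (Real.tendsto_exp_atBot.comp (tendsto_neg_atTop_atBot.comp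
      (tendsto_id.const_mul_atTop (by positivity : 0 < π / 2)))).const_mul C
    rw [mul_zero] at h
    refine h.congr fun y => ?_
    simp only [Function.comp_apply, id]
    ring_nf
  refine squeeze_zero_norm' ?_ (hexp.comp (tendsto_comap : Tendsto UpperHalfPlane.im _ _))
  filter_upwards [(atImInfty_mem _).2 ⟨1, fun τ h => h⟩] with τ hτ
  exact hC τ hτ

lemma tendsto_ofComplex_I_mul_atImInfty :
    Tendsto (fun t : ℝ => ofComplex (I * t)) atTop atImInfty := by
  rw [atImInfty, tendsto_comap_iff]
  refine tendsto_id.congr' ?_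
  filter_upwards [eventually_gt_atTop 0] with t ht
  simp [ofComplex_apply_of_im_pos, ht, ← UpperHalfPlane.coe_im]

lemma isZeroAtImInfty_wForm_slash (γ : SL(2, ℤ)) :
    IsZeroAtImInfty ((wForm ∘ UpperHalfPlane.coe) ∣[(3 : ℤ)] γ) := by
  obtain ⟨u, hu⟩ := exists_slash_eq_smul_of_slash_S_of_slash_T
    (u := Units.mk0 I I_ne_zero) (v := Units.mk0 I I_ne_zero) wForm_slash_S wForm_slash_T γ
  exact hu ▸ isZeroAtImInfty_wForm.smul (u : ℂ)

/-- Every `SL₂(ℤ)`-translate of `w` vanishes at the cusp `i∞`: for every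
`[[a, b], [c, d]] ∈ SL₂(ℤ)`,
`lim_{t → ∞} (c(it) + d)⁻³ · w((a(it) + b)/(c(it) + d)) = 0` (so `w` is a cusp form). -/
theorem wForm_cuspidal (a b c d : ℤ) (hdet : a * d - b * c = 1) :
    Filter.Tendsto (fun t : ℝ =>
        ((c : ℂ) * (I * (t : ℂ)) + (d : ℂ)) ^ (-3 : ℤ) *
          wForm (((a : ℂ) * (I * (t : ℂ)) + (b : ℂ)) / ((c : ℂ) * (I * (t : ℂ)) + (d : ℂ))))
      Filter.atTop (nhds 0) := by
  let γ : SL(2, ℤ) := ⟨!![a, b; c, d], by rw [Matrix.det_fin_two_of]; exact hdet⟩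
  refine ((isZeroAtImInfty_wForm_slash γ).comp tendsto_ofComplex_I_mul_atImInfty).congr' ?_
  filter_upwards [eventually_gt_atTop 0] with t ht
  have hτ : 0 < (I * t).im := by simpa
  rw [Function.comp_apply, ModularForm.SL_slash_apply, Function.comp_apply,
    UpperHalfPlane.coe_specialLinearGroup_apply,
    ModularGroup.denom_apply, ofComplex_apply_of_im_pos hτ]
  simp [γ, mul_comm]
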